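/- Let ψ : ℕ → (0,∞) satisfy ψ(q) ≤ 1/q² for all q, and set φ(q) = 1/(q²ψ(q)). An irrational x ∈ [0,1] with partial quotients ω_n and convergent denominators q_n is ψ-well approximable (i.e., for every ε > 0 there are infinitely many rationals p/q with |x − p/q| ≤ εψ(q)) if and only if for every K > 0 there exist infinitely many n with ω_n ≥ K φ(q_n). -/

import Mathlib

open Real Set

noncomputable def gaussMap (x : ℝ) : ℝ := if x = 0 then 0 else 1 / x - ⌊1 / x⌋

noncomputable def cfOmega (x : ℝ) (n : ℕ) : ℕ := (⌊1 / (gaussMap^[n] x)⌋).toNat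

/-- (q_{n-1}, q_n) for the convergent denominators of x, with q_{-1} = 0, q_0 = 1. -/
noncomputable def cfQPair (x : ℝ) : ℕ → ℕ × ℕ
  | 0 => (0, 1)
  | n + 1 => ((cfQPair x n).2, cfOmega x n * (cfQPair x n).2 + (cfQPair x n).1)

noncomputable def cfQ (x : ℝ) (n : ℕ) : ℕ := (cfQPair x n).2

/-- (p_{n-1}, p_n) for the convergent numerators of x, with p_{-1} = 1, p_0 = 0. -/
noncomputable def cfPPair (x : ℝ) : ℕ → ℕ × ℕ
  | 0 => (1, 0)
  | n + 1 => ((cfPPair x n).2, cfOmega x n * (cfPPair x n).2 + (cfPPair x n).1)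

noncomputable def cfP (x : ℝ) (n : ℕ) : ℕ := (cfPPair x n).2

/-!
Write `t_n = gaussMap^[n] x`. Then `x = (p_n + p_{n-1} t_n) / (q_n + q_{n-1} t_n)`, and the
determinant identity `p_{n-1} q_n - p_n q_{n-1} = (-1)^n` turns this into
`|x - p_n/q_n| = t_n / (q_n (q_n + q_{n-1} t_n))`. As `1/t_n = ω_n + t_{n+1}`, the error lies
between `1/(2(ω_n+1)q_n²)` and `1/(ω_n q_n²)`, so `|x - p_n/q_n| ≤ εψ(q_n)` and
`ω_n ≥ φ(q_n)/ε` are equivalent up to constants. Large partial quotients therefore give infinitely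
many good convergents, which are distinct because `q_n` increases. Conversely, as `ψ(q) ≤ 1/q²`,
for small `ε` every `εψ`-approximation satisfies `|x - r| < 1/(2 den(r)²)`, so by Legendre's
theorem it is a convergent.
-/

lemma gaussMap_of_ne_zero {t : ℝ} (ht : t ≠ 0) : gaussMap t = Int.fract t⁻¹ := by
  rw [gaussMap, if_neg ht, one_div, Int.fract]

lemma irrational_gaussMap {t : ℝ} (ht : Irrational t) : Irrational (gaussMap t) := by
  rw [gaussMap_of_ne_zero ht.ne_zero, Int.fract]
  exact ht.inv.sub_intCast _

lemma gaussMap_mem_Ioo {t : ℝ} (ht : Irrational t) : gaussMap t ∈ Ioo 0 1 := by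
  have hirr := irrational_gaussMap ht
  rw [gaussMap_of_ne_zero ht.ne_zero] at hirr ⊢
  exact ⟨(Int.fract_nonneg _).lt_of_ne' hirr.ne_zero, Int.fract_lt_one _⟩

lemma irrational_gaussMap_iterate {x : ℝ} (hx : Irrational x) (n : ℕ) :
    Irrational (gaussMap^[n] x) :=
  Function.Iterate.rec _ hx (fun _ => irrational_gaussMap) n

lemma gaussMap_iterate_mem_Ioo {x : ℝ} (hx : Irrational x) (hx01 : x ∈ Ioo 0 1) :
    ∀ n, gaussMap^[n] x ∈ Ioo 0 1
  | 0 => hx01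
  | n + 1 => by
    rw [Function.iterate_succ_apply']
    exact gaussMap_mem_Ioo (irrational_gaussMap_iterate hx n)

lemma cfOmega_eq_floor {x : ℝ} (hx : Irrational x) (hx01 : x ∈ Ioo 0 1) (n : ℕ) :
    (cfOmega x n : ℤ) = ⌊(gaussMap^[n] x)⁻¹⌋ := by
  rw [cfOmega, one_div, Int.toNat_of_nonneg]
  exact Int.floor_nonneg.mpr (inv_nonneg.mpr (gaussMap_iterate_mem_Ioo hx hx01 n).1.le)

lemma inv_gaussMap_iterate {x : ℝ} (hx : Irrational x) (hx01 : x ∈ Ioo 0 1) (n : ℕ) :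
    (gaussMap^[n] x)⁻¹ = cfOmega x n + gaussMap^[n + 1] x := by
  have hω : ((cfOmega x n : ℤ) : ℝ) = ⌊(gaussMap^[n] x)⁻¹⌋ := by
    rw [cfOmega_eq_floor hx hx01]
  rw [Function.iterate_succ_apply', gaussMap_of_ne_zero (gaussMap_iterate_mem_Ioo hx hx01 n).1.ne',
    Int.fract, ← hω]
  push_cast
  ring

lemma cfOmega_le_inv {x : ℝ} (hx : Irrational x) (hx01 : x ∈ Ioo 0 1) (n : ℕ) :
    (cfOmega x n : ℝ) ≤ (gaussMap^[n] x)⁻¹ := by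
  rw [inv_gaussMap_iterate hx hx01]
  linarith [(gaussMap_iterate_mem_Ioo hx hx01 (n + 1)).1]

lemma inv_lt_cfOmega_add_one {x : ℝ} (hx : Irrational x) (hx01 : x ∈ Ioo 0 1) (n : ℕ) :
    (gaussMap^[n] x)⁻¹ < cfOmega x n + 1 := by
  rw [inv_gaussMap_iterate hx hx01]
  linarith [(gaussMap_iterate_mem_Ioo hx hx01 (n + 1)).2]

lemma one_le_cfOmega {x : ℝ} (hx : Irrational x) (hx01 : x ∈ Ioo 0 1) (n : ℕ) :
    1 ≤ cfOmega x n := by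
  obtain ⟨ht0, ht1⟩ := gaussMap_iterate_mem_Ioo hx hx01 n
  have : (0 : ℝ) < cfOmega x n := by
    linarith [inv_lt_cfOmega_add_one hx hx01 n, one_lt_inv₀ ht0 |>.mpr ht1]
  exact_mod_cast this

lemma cfQPair_succ_fst (x : ℝ) (n : ℕ) : (cfQPair x (n + 1)).1 = cfQ x n := rfl

lemma cfPPair_succ_fst (x : ℝ) (n : ℕ) : (cfPPair x (n + 1)).1 = cfP x n := rfl

lemma cfQ_succ (x : ℝ) (n : ℕ) : cfQ x (n + 1) = cfOmega x n * cfQ x n + (cfQPair x n).1 := rfl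

lemma cfP_succ (x : ℝ) (n : ℕ) : cfP x (n + 1) = cfOmega x n * cfP x n + (cfPPair x n).1 := rfl

lemma cfQ_pos_and_cfQPair_fst_le {x : ℝ} (hx : Irrational x) (hx01 : x ∈ Ioo 0 1) :
    ∀ n, 0 < cfQ x n ∧ (cfQPair x n).1 ≤ cfQ x n
  | 0 => by simp [cfQ, cfQPair]
  | n + 1 => by
    have hω := one_le_cfOmega hx hx01 n
    have hq := (cfQ_pos_and_cfQPair_fst_le hx hx01 n).1
    rw [cfQ_succ, cfQPair_succ_fst]
    constructor <;> nlinarith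

lemma cfQ_pos {x : ℝ} (hx : Irrational x) (hx01 : x ∈ Ioo 0 1) (n : ℕ) : 0 < cfQ x n :=
  (cfQ_pos_and_cfQPair_fst_le hx hx01 n).1

lemma cfQPair_fst_le_cfQ {x : ℝ} (hx : Irrational x) (hx01 : x ∈ Ioo 0 1) (n : ℕ) :
    (cfQPair x n).1 ≤ cfQ x n :=
  (cfQ_pos_and_cfQPair_fst_le hx hx01 n).2

lemma strictMonoOn_cfQ {x : ℝ} (hx : Irrational x) (hx01 : x ∈ Ioo 0 1) :
    StrictMonoOn (cfQ x) (Ici 1) := by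
  refine strictMonoOn_Ici_of_pred_lt fun m hm => ?_
  obtain ⟨n, rfl⟩ : ∃ n, m = n + 2 := ⟨m - 2, by omega⟩
  have hω := one_le_cfOmega hx hx01 (n + 1)
  have hq := cfQ_pos hx hx01 n
  show cfQ x (n + 1) < cfQ x (n + 1 + 1)
  rw [cfQ_succ x (n + 1), cfQPair_succ_fst]
  nlinarith

lemma cfPPair_fst_mul_cfQ_sub (x : ℝ) (n : ℕ) :
    ((cfPPair x n).1 : ℤ) * cfQ x n - cfP x n * (cfQPair x n).1 = (-1) ^ n := by
  induction n with
  | zero => simp [cfP, cfQ, cfPPair, cfQPair]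
  | succ n ih =>
    simp only [cfQ_succ, cfP_succ, cfQPair_succ_fst, cfPPair_succ_fst]
    push_cast
    linear_combination -ih

lemma coprime_cfP_cfQ (x : ℝ) (n : ℕ) : (cfP x n).Coprime (cfQ x n) := by
  refine Nat.isCoprime_iff_coprime.mp ⟨-(-1) ^ n * (cfQPair x n).1, (-1) ^ n * (cfPPair x n).1, ?_⟩
  have hsq : ((-1 : ℤ) ^ n) ^ 2 = 1 := by rw [← pow_mul, mul_comm, pow_mul, neg_one_sq, one_pow]
  linear_combination (-1) ^ n * cfPPair_fst_mul_cfQ_sub x n + hsq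

lemma den_cfP_div_cfQ {x : ℝ} (hx : Irrational x) (hx01 : x ∈ Ioo 0 1) (n : ℕ) :
    ((cfP x n : ℚ) / cfQ x n).den = cfQ x n := by
  have := Rat.den_div_eq_of_coprime (a := cfP x n) (b := cfQ x n)
    (by exact_mod_cast cfQ_pos hx hx01 n) (coprime_cfP_cfQ x n)
  simpa using this

lemma mul_cfQ_add_eq_cfP_add {x : ℝ} (hx : Irrational x) (hx01 : x ∈ Ioo 0 1) (n : ℕ) :
    x * (cfQ x n + (cfQPair x n).1 * gaussMap^[n] x)
      = cfP x n + (cfPPair x n).1 * gaussMap^[n] x := by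
  induction n with
  | zero => simp [cfP, cfQ, cfPPair, cfQPair]
  | succ n ih =>
    have hrec : gaussMap^[n] x * (cfOmega x n + gaussMap^[n + 1] x) = 1 := by
      rw [← inv_gaussMap_iterate hx hx01 n]
      exact mul_inv_cancel₀ (gaussMap_iterate_mem_Ioo hx hx01 n).1.ne'
    rw [cfQ_succ, cfP_succ, cfQPair_succ_fst, cfPPair_succ_fst]
    push_cast
    linear_combination (cfOmega x n + gaussMap^[n + 1] x) * ih
      + ((cfPPair x n).1 - x * (cfQPair x n).1) * hrec

lemma abs_sub_cfP_div_cfQ {x : ℝ} (hx : Irrational x) (hx01 : x ∈ Ioo 0 1) (n : ℕ) :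
    |x - cfP x n / cfQ x n|
      = gaussMap^[n] x / (cfQ x n * (cfQ x n + (cfQPair x n).1 * gaussMap^[n] x)) := by
  have ht := (gaussMap_iterate_mem_Ioo hx hx01 n).1
  have hq : (0 : ℝ) < cfQ x n := by exact_mod_cast cfQ_pos hx hx01 n
  have hD : (0 : ℝ) < cfQ x n + (cfQPair x n).1 * gaussMap^[n] x := by positivity
  have hdet : ((cfPPair x n).1 : ℝ) * cfQ x n - cfP x n * (cfQPair x n).1 = (-1) ^ n := by
    exact_mod_cast cfPPair_fst_mul_cfQ_sub x n
  have hsub : x - cfP x n / cfQ x n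
      = (-1) ^ n * gaussMap^[n] x / (cfQ x n * (cfQ x n + (cfQPair x n).1 * gaussMap^[n] x)) := by
    field_simp
    linear_combination (cfQ x n : ℝ) * mul_cfQ_add_eq_cfP_add hx hx01 n + gaussMap^[n] x * hdet
  rw [hsub, abs_div, abs_mul, abs_pow, abs_neg, abs_one, one_pow, one_mul, abs_of_pos ht,
    abs_of_pos (by positivity)]

lemma abs_sub_cfP_div_cfQ_le {x : ℝ} (hx : Irrational x) (hx01 : x ∈ Ioo 0 1) (n : ℕ) :
    |x - cfP x n / cfQ x n| ≤ 1 / (cfOmega x n * (cfQ x n : ℝ) ^ 2) := by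
  have ht := (gaussMap_iterate_mem_Ioo hx hx01 n).1
  have hq : (0 : ℝ) < cfQ x n := by exact_mod_cast cfQ_pos hx hx01 n
  have hω : (0 : ℝ) < cfOmega x n := by exact_mod_cast one_le_cfOmega hx hx01 n
  have ht_le : gaussMap^[n] x ≤ (cfOmega x n : ℝ)⁻¹ :=
    (le_inv_comm₀ hω ht).mp (cfOmega_le_inv hx hx01 n)
  calc |x - cfP x n / cfQ x n|
      = gaussMap^[n] x / (cfQ x n * (cfQ x n + (cfQPair x n).1 * gaussMap^[n] x)) :=
        abs_sub_cfP_div_cfQ hx hx01 n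
    _ ≤ gaussMap^[n] x / (cfQ x n * cfQ x n) := by
        gcongr
        exact le_add_of_nonneg_right (by positivity)
    _ ≤ (cfOmega x n : ℝ)⁻¹ / (cfQ x n * cfQ x n) := by gcongr
    _ = 1 / (cfOmega x n * (cfQ x n : ℝ) ^ 2) := by ring

lemma lt_abs_sub_cfP_div_cfQ {x : ℝ} (hx : Irrational x) (hx01 : x ∈ Ioo 0 1) (n : ℕ) :
    1 / (2 * (cfOmega x n + 1) * (cfQ x n : ℝ) ^ 2) < |x - cfP x n / cfQ x n| := by
  obtain ⟨ht0, ht1⟩ := gaussMap_iterate_mem_Ioo hx hx01 n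
  have hq : (0 : ℝ) < cfQ x n := by exact_mod_cast cfQ_pos hx hx01 n
  have hq' : ((cfQPair x n).1 : ℝ) ≤ cfQ x n := by exact_mod_cast cfQPair_fst_le_cfQ hx hx01 n
  have ht_gt : ((cfOmega x n : ℝ) + 1)⁻¹ < gaussMap^[n] x :=
    (inv_lt_comm₀ ht0 (by positivity)).mp (inv_lt_cfOmega_add_one hx hx01 n)
  have hD : (cfQ x n : ℝ) + (cfQPair x n).1 * gaussMap^[n] x < 2 * cfQ x n := by
    nlinarith [mul_le_mul_of_nonneg_right hq' ht0.le]
  calc 1 / (2 * (cfOmega x n + 1) * (cfQ x n : ℝ) ^ 2)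
      = ((cfOmega x n : ℝ) + 1)⁻¹ / (cfQ x n * (2 * cfQ x n)) := by field_simp
    _ < gaussMap^[n] x / (cfQ x n * (2 * cfQ x n)) := by gcongr
    _ < gaussMap^[n] x / (cfQ x n * (cfQ x n + (cfQPair x n).1 * gaussMap^[n] x)) := by
        gcongr
    _ = |x - cfP x n / cfQ x n| := (abs_sub_cfP_div_cfQ hx hx01 n).symm

lemma Real.convergent_intCast_add (m : ℤ) (ξ : ℝ) (n : ℕ) :
    (m + ξ).convergent n = m + ξ.convergent n := by
  cases n with
  | zero => simp [convergent_zero, Int.floor_intCast_add]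
  | succ n =>
    simp only [convergent_succ, Int.floor_intCast_add, Int.fract_intCast_add]
    push_cast
    ring

lemma cfOmega_gaussMap (x : ℝ) (n : ℕ) : cfOmega (gaussMap x) n = cfOmega x (n + 1) := by
  simp only [cfOmega, Function.iterate_succ_apply]

lemma cfPPair_succ_eq_cfQPair_gaussMap (x : ℝ) (n : ℕ) :
    cfPPair x (n + 1) = cfQPair (gaussMap x) n := by
  induction n with
  | zero => rfl
  | succ n ih => rw [cfPPair, ih, cfQPair, cfOmega_gaussMap]

lemma cfQPair_succ_eq_smul_cfQPair_gaussMap_add (x : ℝ) (n : ℕ) :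
    cfQPair x (n + 1) = cfOmega x 0 • cfQPair (gaussMap x) n + cfPPair (gaussMap x) n := by
  induction n with
  | zero => simp [cfQPair, cfPPair]
  | succ n ih =>
    rw [cfQPair, ih]
    simp only [cfQPair, cfPPair, cfOmega_gaussMap]
    ext <;> simp only [Prod.smul_fst, Prod.smul_snd, Prod.fst_add, Prod.snd_add, smul_eq_mul]
    ring

lemma convergent_eq_cfP_div_cfQ {x : ℝ} (hx : Irrational x) (hx01 : x ∈ Ioo 0 1) (n : ℕ) :
    x.convergent n = cfP x n / cfQ x n := by
  induction n generalizing x with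
  | zero =>
    simp [convergent_zero, Int.floor_eq_zero_iff.mpr ⟨hx01.1.le, hx01.2⟩, cfP, cfQ, cfPPair,
      cfQPair]
  | succ n ih =>
    have hfloor : ⌊x⌋ = 0 := Int.floor_eq_zero_iff.mpr ⟨hx01.1.le, hx01.2⟩
    have hinv : x⁻¹ = ((cfOmega x 0 : ℤ) : ℝ) + gaussMap x := by
      simpa using inv_gaussMap_iterate hx hx01 0
    have hpos : (0 : ℚ) < cfQ (gaussMap x) n := by
      exact_mod_cast cfQ_pos (irrational_gaussMap hx) (gaussMap_mem_Ioo hx) n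
    rw [convergent_succ, Int.fract, hfloor]
    simp only [Int.cast_zero, sub_zero, zero_add]
    have hp : cfP x (n + 1) = cfQ (gaussMap x) n :=
      congrArg Prod.snd (cfPPair_succ_eq_cfQPair_gaussMap x n)
    have hq : cfQ x (n + 1) = cfOmega x 0 * cfQ (gaussMap x) n + cfP (gaussMap x) n :=
      congrArg Prod.snd (cfQPair_succ_eq_smul_cfQPair_gaussMap_add x n)
    rw [hp, hq, hinv, Real.convergent_intCast_add,
      ih (irrational_gaussMap hx) (gaussMap_mem_Ioo hx)]
    push_cast
    field_simp

lemma exists_eq_cfP_div_cfQ_of_abs_sub_lt {x : ℝ} (hx : Irrational x) (hx01 : x ∈ Ioo 0 1)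
    {r : ℚ} (hr : |x - r| < 1 / (2 * (r.den : ℝ) ^ 2)) : ∃ n, r = cfP x n / cfQ x n := by
  obtain ⟨n, rfl⟩ := Real.exists_rat_eq_convergent hr
  exact ⟨n, convergent_eq_cfP_div_cfQ hx hx01 n⟩

lemma abs_sub_cfP_div_cfQ_le_of_le_cfOmega {x : ℝ} (hx : Irrational x) (hx01 : x ∈ Ioo 0 1)
    {n : ℕ} {ε c : ℝ} (hε : 0 < ε) (hc : 0 < c)
    (h : ε⁻¹ * (1 / ((cfQ x n : ℝ) ^ 2 * c)) ≤ cfOmega x n) :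
    |x - cfP x n / cfQ x n| ≤ ε * c := by
  have hq : (0 : ℝ) < cfQ x n := by exact_mod_cast cfQ_pos hx hx01 n
  have hω : (0 : ℝ) < cfOmega x n := by exact_mod_cast one_le_cfOmega hx hx01 n
  rw [inv_mul_eq_div, div_div, div_le_iff₀ (by positivity)] at h
  refine (abs_sub_cfP_div_cfQ_le hx hx01 n).trans ?_
  rw [div_le_iff₀ (by positivity)]
  linarith

lemma le_cfOmega_of_abs_sub_le {x : ℝ} (hx : Irrational x) (hx01 : x ∈ Ioo 0 1)
    {n : ℕ} {K c : ℝ} (hK : 0 < K) (hc : 0 < c) (hcq : c ≤ 1 / (cfQ x n : ℝ) ^ 2)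
    (h : |x - cfP x n / cfQ x n| ≤ 1 / (2 * (K + 1)) * c) :
    K * (1 / ((cfQ x n : ℝ) ^ 2 * c)) ≤ cfOmega x n := by
  have hq : (0 : ℝ) < cfQ x n := by exact_mod_cast cfQ_pos hx hx01 n
  rw [le_div_iff₀' (by positivity)] at hcq
  have hlt := (lt_abs_sub_cfP_div_cfQ hx hx01 n).trans_le h
  rw [one_div_mul_eq_div, div_lt_div_iff₀ (by positivity) (by positivity)] at hlt
  rw [mul_one_div, div_le_iff₀ (by positivity)]
  linarith

lemma infinite_approx_of_infinite_large_cfOmega {x : ℝ} (hx : Irrational x)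
    (hx01 : x ∈ Ioo 0 1) {ψ : ℕ → ℝ} (hψ : ∀ q : ℕ, 1 ≤ q → 0 < ψ q) {ε : ℝ} (hε : 0 < ε)
    (h : {n : ℕ | ε⁻¹ * (1 / ((cfQ x n : ℝ) ^ 2 * ψ (cfQ x n))) ≤ cfOmega x n}.Infinite) :
    {r : ℚ | |x - r| ≤ ε * ψ r.den}.Infinite := by
  -- `cfQ x 0 = cfQ x 1` when `cfOmega x 0 = 1`
  have hinj : InjOn (fun n => (cfP x n : ℚ) / cfQ x n) (Iio 1)ᶜ := by
    rw [compl_Iio]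
    exact InjOn.of_comp (g := Rat.den)
      ((strictMonoOn_cfQ hx hx01).injOn.congr fun n _ => (den_cfP_div_cfQ hx hx01 n).symm)
  refine ((h.sdiff (finite_Iio 1)).image (hinj.mono (sdiff_subset_compl _ _))).mono ?_
  rintro _ ⟨n, ⟨hn, -⟩, rfl⟩
  rw [mem_ofPred_eq, den_cfP_div_cfQ hx hx01]
  push_cast
  exact abs_sub_cfP_div_cfQ_le_of_le_cfOmega hx hx01 hε (hψ _ (cfQ_pos hx hx01 n)) hn

lemma infinite_large_cfOmega_of_infinite_approx {x : ℝ} (hx : Irrational x)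
    (hx01 : x ∈ Ioo 0 1) {ψ : ℕ → ℝ} (hψpos : ∀ q : ℕ, 1 ≤ q → 0 < ψ q)
    (hψle : ∀ q : ℕ, 1 ≤ q → ψ q ≤ 1 / (q : ℝ) ^ 2) {K : ℝ} (hK : 0 < K)
    (h : {r : ℚ | |x - r| ≤ 1 / (2 * (K + 1)) * ψ r.den}.Infinite) :
    {n : ℕ | K * (1 / ((cfQ x n : ℝ) ^ 2 * ψ (cfQ x n))) ≤ cfOmega x n}.Infinite := by
  refine Infinite.of_image (fun n => (cfP x n : ℚ) / cfQ x n) (h.mono fun r hr => ?_)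
  have hlt : |x - r| < 1 / (2 * (r.den : ℝ) ^ 2) :=
    calc |x - r| ≤ 1 / (2 * (K + 1)) * ψ r.den := hr
      _ ≤ 1 / (2 * (K + 1)) * (1 / (r.den : ℝ) ^ 2) := by gcongr; exact hψle _ r.den_pos
      _ < 1 / (2 * (r.den : ℝ) ^ 2) := by
        rw [one_div_mul_one_div]
        gcongr
        linarith
  obtain ⟨n, rfl⟩ := exists_eq_cfP_div_cfQ_of_abs_sub_lt hx hx01 hlt
  have hq := cfQ_pos hx hx01 n
  rw [mem_ofPred_eq, den_cfP_div_cfQ hx hx01] at hr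
  push_cast at hr
  exact ⟨n, le_cfOmega_of_abs_sub_le hx hx01 hK (hψpos _ hq) (hψle _ hq) hr, rfl⟩

theorem stmt4 (x : ℝ) (hx : x ∈ Icc (0:ℝ) 1) (hirr : Irrational x)
    (ψ : ℕ → ℝ) (hψpos : ∀ q : ℕ, 1 ≤ q → 0 < ψ q)
    (hψle : ∀ q : ℕ, 1 ≤ q → ψ q ≤ 1 / (q : ℝ) ^ 2) :
    (∀ ε : ℝ, 0 < ε → {r : ℚ | |x - (r : ℝ)| ≤ ε * ψ r.den}.Infinite) ↔
      (∀ K : ℝ, 0 < K →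
        {n : ℕ | K * (1 / ((cfQ x n : ℝ) ^ 2 * ψ (cfQ x n))) ≤ (cfOmega x n : ℝ)}.Infinite) := by
  have hx01 : x ∈ Ioo 0 1 := ⟨hx.1.lt_of_ne' hirr.ne_zero, hx.2.lt_of_ne hirr.ne_one⟩
  constructor
  · intro H K hK
    exact infinite_large_cfOmega_of_infinite_approx hirr hx01 hψpos hψle hK (H _ (by positivity))
  · intro H ε hε
    exact infinite_approx_of_infinite_large_cfOmega hirr hx01 hψpos hε (H _ (inv_pos.mpr hε))
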